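/- For every profile π on the n-cube Q_n, Med(π) ⊆ f(π) for every consensus function f satisfying the Translation property (T) and the Majority property (Maj). -/

import Mathlib

/-- A vertex of the n-cube `Q_n`: an element of `{0,1}^n`. -/
abbrev Vertex (n : ℕ) := Fin n → Bool

/-- Coordinatewise addition modulo 2 (`u ⊕ v`). -/
def vxor {n : ℕ} (u v : Vertex n) : Vertex n := fun i => xor (u i) (v i)

/-- A profile: a nonempty finite sequence of vertices of `Q_n`. -/
def Profile (n : ℕ) := { l : List (Vertex n) // l ≠ [] }

/-- Translation of a profile: `π ⊕ v = (x₁ ⊕ v, …, x_k ⊕ v)`. -/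
def pxor {n : ℕ} (π : Profile n) (v : Vertex n) : Profile n :=
  ⟨π.1.map (fun x => vxor x v), by simpa using π.2⟩

/-- The Translation property (T) for a consensus function. -/
def Translation {n : ℕ} (f : Profile n → Set (Vertex n)) : Prop :=
  ∀ (π : Profile n) (u v : Vertex n), u ∈ f π → vxor u v ∈ f (pxor π v)

/-- Hamming distance on the n-cube. -/
def cubeDist {n : ℕ} (u v : Vertex n) : ℕ := hammingDist u v

/-- The all-zeros vertex `𝟎`. -/
def zeroV (n : ℕ) : Vertex n := fun _ => false

/-- `‖u‖ = d(𝟎,u)`, the number of ones in `u`. -/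
def vnorm {n : ℕ} (u : Vertex n) : ℕ := cubeDist (zeroV n) u

/-- `‖π‖ = max{‖x₁‖,…,‖x_k‖}`. -/
def pnorm {n : ℕ} (π : Profile n) : ℕ := (π.1.map vnorm).foldr max 0

/-- Eccentricity `e(x, π) = max_j d(x, x_j)`. -/
def ecc {n : ℕ} (π : Profile n) (x : Vertex n) : ℕ :=
  (π.1.map (fun y => cubeDist x y)).foldr max 0

/-- The center function. -/
def Cen {n : ℕ} (π : Profile n) : Set (Vertex n) :=
  {x | ∀ y : Vertex n, ecc π x ≤ ecc π y}

/-- Status `S_π(x) = Σ_j d(x, x_j)`. -/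
def status {n : ℕ} (π : Profile n) (x : Vertex n) : ℕ :=
  (π.1.map (fun y => cubeDist x y)).sum

/-- The median function. -/
def Med {n : ℕ} (π : Profile n) : Set (Vertex n) :=
  {x | ∀ y : Vertex n, status π x ≤ status π y}

/-- The anti-median function. -/
def AM {n : ℕ} (π : Profile n) : Set (Vertex n) :=
  {x | ∀ y : Vertex n, status π y ≤ status π x}

/-- `Σ_{j=1}^k xᵢ^j`: the number of profile entries with a 1 in coordinate `i`. -/
def cnt {n : ℕ} (π : Profile n) (i : Fin n) : ℕ :=
  (π.1.map (fun x => if x i then 1 else 0)).sum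

/-- The majority vertex `Maj(π)`: `wᵢ = 1` iff `Σ_j xᵢ^j > k/2`. -/
def Maj {n : ℕ} (π : Profile n) : Vertex n :=
  fun i => decide (π.1.length < 2 * cnt π i)

/-- The minority vertex `Min(π)`: `mᵢ = 1` iff `Σ_j xᵢ^j < k/2`. -/
def MinV {n : ℕ} (π : Profile n) : Vertex n :=
  fun i => decide (2 * cnt π i < π.1.length)

/-- The Condorcet score `Cs(π)`. -/
def Cs {n : ℕ} (π : Profile n) : ℕ :=
  (Finset.univ.filter (fun i : Fin n => 2 * cnt π i = π.1.length)).card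

/-- The Majority property (Maj). -/
def MajProp {n : ℕ} (f : Profile n → Set (Vertex n)) : Prop :=
  ∀ π : Profile n, Maj π ∈ f π

/-- The Minority property (Min). -/
def MinProp {n : ℕ} (f : Profile n → Set (Vertex n)) : Prop :=
  ∀ π : Profile n, MinV π ∈ f π

/-- The Restricted Range property (RR): `|f(π)| ≤ 2^{Cs(π)}`. -/
def RestrictedRange {n : ℕ} (f : Profile n → Set (Vertex n)) : Prop :=
  ∀ π : Profile n, (f π).ncard ≤ 2 ^ Cs π

/-- The `ℓ_p` status `ℓ_pS_π(x) = Σ_j d(x,x_j)^p`. -/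
noncomputable def lpStatus {n : ℕ} (p : ℝ) (π : Profile n) (x : Vertex n) : ℝ :=
  (π.1.map (fun y => (cubeDist x y : ℝ) ^ p)).sum

/-- The `ℓ_p`-function. -/
noncomputable def lpFun {n : ℕ} (p : ℝ) (π : Profile n) : Set (Vertex n) :=
  {x | ∀ y : Vertex n, lpStatus p π x ≤ lpStatus p π y}

/-- The `p`-Characteristic `Char_p(π) = Σ_j ‖x_j‖^p`. -/
noncomputable def Charp {n : ℕ} (p : ℝ) (π : Profile n) : ℝ :=
  (π.1.map (fun x => (vnorm x : ℝ) ^ p)).sum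

/-- Concatenation of profiles `π₁π₂`. -/
def pconcat {n : ℕ} (π₁ π₂ : Profile n) : Profile n :=
  ⟨π₁.1 ++ π₂.1, by simp [π₁.2]⟩

/-- The profile of length one consisting of the single vertex `x`. -/
def singleP {n : ℕ} (x : Vertex n) : Profile n := ⟨[x], by simp⟩

/-- The Consistency property (C). -/
def Consistency {n : ℕ} (f : Profile n → Set (Vertex n)) : Prop :=
  ∀ π₁ π₂ : Profile n, (f π₁ ∩ f π₂).Nonempty → f (pconcat π₁ π₂) = f π₁ ∩ f π₂

/-!
The status splits into a sum over coordinates, so a median vertex `x` minimises, in each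
coordinate `i`, the number of entries disagreeing with `x i`. Translating the profile by `x`
turns these disagreements into the ones-counts `cnt`, hence `Maj(π ⊕ x) = 𝟎`. By (Maj) and
(T), `𝟎 ⊕ x = x` then lies in `f((π ⊕ x) ⊕ x) = f(π)`.
-/

section
variable {n : ℕ}

lemma vxor_vxor_cancel_right (x v : Vertex n) : vxor (vxor x v) v = x := by
  funext i; simp [vxor]

lemma zeroV_vxor (v : Vertex n) : vxor (zeroV n) v = v := by
  funext i; simp [vxor, zeroV]

lemma pxor_pxor (π : Profile n) (v : Vertex n) : pxor (pxor π v) v = π :=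
  Subtype.ext <| by simp [pxor, Function.comp_def, vxor_vxor_cancel_right]

def disagreements (π : Profile n) (i : Fin n) (b : Bool) : ℕ :=
  π.1.countP fun y => y i != b

lemma status_eq_sum_disagreements (π : Profile n) (x : Vertex n) :
    status π x = ∑ i, disagreements π i (x i) := by
  simp only [status, disagreements]
  induction π.1 with
  | nil => simp
  | cons y l ih =>
    rw [List.map_cons, List.sum_cons, ih, Nat.add_comm]
    simp only [List.countP_cons, Finset.sum_add_distrib, cubeDist, hammingDist, Finset.card_filter]
    congr 1
    exact Finset.sum_congr rfl fun i _ => by cases x i <;> cases y i <;> rfl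

lemma disagreements_add_disagreements_not (π : Profile n) (i : Fin n) (b : Bool) :
    disagreements π i b + disagreements π i (!b) = π.1.length := by
  rw [List.length_eq_countP_add_countP (fun y => y i != b), disagreements, disagreements]
  congr 1
  exact List.countP_congr fun y _ => by cases y i <;> cases b <;> simp

/-- Changing the `i`-th coordinate of `x` alone changes only the `i`-th summand of the status. -/
lemma disagreements_le_of_mem_Med {π : Profile n} {x : Vertex n} (hx : x ∈ Med π)
    (i : Fin n) (b : Bool) : disagreements π i (x i) ≤ disagreements π i b := by
  have hle := hx (Function.update x i b)
  simp only [status_eq_sum_disagreements] at hle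
  have hrest : ∑ j ∈ Finset.univ.erase i, disagreements π j (Function.update x i b j)
      = ∑ j ∈ Finset.univ.erase i, disagreements π j (x j) :=
    Finset.sum_congr rfl fun j hj => by rw [Function.update_of_ne (Finset.ne_of_mem_erase hj)]
  rw [← Finset.add_sum_erase _ _ (Finset.mem_univ i),
    ← Finset.add_sum_erase _ _ (Finset.mem_univ i), hrest, Function.update_self] at hle
  exact Nat.le_of_add_le_add_right hle

lemma cnt_pxor (π : Profile n) (v : Vertex n) (i : Fin n) :
    cnt (pxor π v) i = disagreements π i (v i) := by
  simp only [cnt, pxor, disagreements]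
  induction π.1 with
  | nil => simp
  | cons y l ih =>
    simp only [List.map_cons, List.sum_cons, List.countP_cons, ih, vxor, Nat.add_comm]
    congr 2

lemma Maj_pxor_eq_zeroV_of_mem_Med {π : Profile n} {x : Vertex n} (hx : x ∈ Med π) :
    Maj (pxor π x) = zeroV n := by
  funext i
  have hmin := disagreements_le_of_mem_Med hx i (!x i)
  have hsum := disagreements_add_disagreements_not π i (x i)
  have hlen : (pxor π x).1.length = π.1.length := List.length_map _
  simp only [Maj, zeroV, cnt_pxor, hlen, decide_eq_false_iff_not]
  omega

end

theorem stmt18_general {n : ℕ} (π : Profile n) (f : Profile n → Set (Vertex n))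
    (hT : Translation f) (hMaj : MajProp f) :
    Med π ⊆ f π := by
  intro u hu
  have hzero : zeroV n ∈ f (pxor π u) := Maj_pxor_eq_zeroV_of_mem_Med hu ▸ hMaj (pxor π u)
  simpa only [zeroV_vxor, pxor_pxor] using hT _ _ u hzero

/-- For every profile `π`, `Med(π) ⊆ f(π)` for every consensus function `f`
satisfying (T) and (Maj). -/
theorem stmt18 {n : ℕ} (π : Profile n) (f : Profile n → Set (Vertex n))
    (hf : ∀ π : Profile n, (f π).Nonempty)
    (hT : Translation f) (hMaj : MajProp f) :
    Med π ⊆ f π :=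
  stmt18_general π f hT hMaj
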